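/- Let p be an odd prime and m, k positive integers with v_2(m) ≤ v_2(k). Let c ∈ GF(p^{gcd(m,k)}) ⊆ GF(p^m) with c ≠ 1. Then F(x) = x^{p^k+1} is APcN over GF(p^m) with respect to c: for all a, b ∈ GF(p^m), the equation (x+a)^{p^k+1} - c·x^{p^k+1} = b has at most two solutions, and for a = 1 there exists b for which it has exactly two solutions. -/

import Mathlib

/-!
Since `x ↦ x ^ p ^ k` is additive and fixes `c`, completing the square gives
`(x + a) ^ (p ^ k + 1) - c * x ^ (p ^ k + 1) = (1 - c) * (x + a / (1 - c)) ^ (p ^ k + 1) + const`,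
so every solution set is a translate of a fibre of `y ↦ y ^ (p ^ k + 1)`.
These fibres are `{y, -y}`: if `v ^ (p ^ k + 1) = 1` then `v ^ p ^ k = v⁻¹`, so `v` is fixed by
the Frobenius powers `p ^ (2 * k)` and `p ^ m`, hence by `p ^ gcd (2 * k) m`; the condition on the
2-adic valuations makes `gcd (2 * k) m` divide `k`, so `v⁻¹ = v ^ p ^ k = v` and `v = ±1`.
-/

open Function

theorem Nat.gcd_two_mul_dvd_of_padicValNat_le {k m : ℕ} (hm : m ≠ 0)
    (hv : padicValNat 2 m ≤ padicValNat 2 k) : Nat.gcd (2 * k) m ∣ k := by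
  rcases eq_or_ne k 0 with rfl | hk
  · exact dvd_zero _
  have hd : Nat.gcd (2 * k) m ≠ 0 := Nat.gcd_ne_zero_right hm
  rw [← Nat.factorization_le_iff_dvd hd hk]
  intro ℓ
  by_cases hℓ : ℓ = 2
  · subst hℓ
    calc (Nat.gcd (2 * k) m).factorization 2 ≤ m.factorization 2 :=
          (Nat.factorization_le_iff_dvd hd hm).mpr (Nat.gcd_dvd_right _ _) 2
      _ ≤ k.factorization 2 := by
          rwa [Nat.factorization_def m Nat.prime_two, Nat.factorization_def k Nat.prime_two]
  · have h := (Nat.factorization_le_iff_dvd hd (by positivity)).mpr (Nat.gcd_dvd_left _ _) ℓ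
    rwa [Nat.factorization_mul two_ne_zero hk, Finsupp.add_apply,
      Nat.Prime.factorization Nat.prime_two, Finsupp.single_apply,
      if_neg fun h => hℓ h.symm, zero_add] at h

theorem isPeriodicPt_pow_iff {M : Type*} [Monoid M] {p n : ℕ} {x : M} :
    IsPeriodicPt (· ^ p) n x ↔ x ^ p ^ n = x := by
  rw [IsPeriodicPt, IsFixedPt, pow_iterate]

theorem FiniteField.eq_one_or_eq_neg_one_of_pow_pow_add_one_eq_one {F : Type*} [Field F]
    [Fintype F] {p m k : ℕ} (hcard : Fintype.card F = p ^ m) (hm : m ≠ 0)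
    (hv : padicValNat 2 m ≤ padicValNat 2 k) {v : F} (h : v ^ (p ^ k + 1) = 1) :
    v = 1 ∨ v = -1 := by
  have hv0 : v ≠ 0 := by rintro rfl; simp at h
  have hinv : v ^ p ^ k = v⁻¹ := eq_inv_of_mul_eq_one_left (by rwa [← pow_succ])
  have h2k : IsPeriodicPt (· ^ p) (2 * k) v := by
    rw [isPeriodicPt_pow_iff, mul_comm, pow_mul, sq, pow_mul, hinv, inv_pow, hinv, inv_inv]
  have hm' : IsPeriodicPt (· ^ p) m v := by
    rw [isPeriodicPt_pow_iff, ← hcard, FiniteField.pow_card]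
  have hk : v ^ p ^ k = v :=
    isPeriodicPt_pow_iff.mp ((h2k.gcd hm').trans_dvd (Nat.gcd_two_mul_dvd_of_padicValNat_le hm hv))
  rw [← mul_self_eq_one_iff]
  nth_rw 2 [← hk]
  rw [hinv, mul_inv_cancel₀ hv0]

section Fibres

variable {K : Type*} [Field K] {n : ℕ}

theorem eq_or_eq_neg_of_pow_eq_pow (hn : n ≠ 0) (hroots : ∀ v : K, v ^ n = 1 → v = 1 ∨ v = -1)
    {y z : K} (h : y ^ n = z ^ n) : y = z ∨ y = -z := by
  rcases eq_or_ne z 0 with rfl | hz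
  · exact .inl (pow_eq_zero_iff hn |>.mp (h.trans (zero_pow hn)))
  rcases hroots (y / z) (by rw [div_pow, h, div_self (pow_ne_zero n hz)]) with h1 | h1
  · exact .inl ((div_eq_one_iff_eq hz).mp h1)
  · exact .inr (by rw [div_eq_iff hz] at h1; rw [h1, neg_one_mul])

theorem ncard_setOf_add_pow_eq_le_two (hn : n ≠ 0)
    (hroots : ∀ v : K, v ^ n = 1 → v = 1 ∨ v = -1) (α β : K) :
    {x : K | (x + α) ^ n = β}.ncard ≤ 2 := by
  rcases Set.eq_empty_or_nonempty {x : K | (x + α) ^ n = β} with hS | ⟨x₀, hx₀⟩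
  · simp [hS]
  have hsub : {x : K | (x + α) ^ n = β} ⊆ {x₀, -(x₀ + α) - α} := by
    intro x hx
    rcases eq_or_eq_neg_of_pow_eq_pow hn hroots (hx.trans hx₀.symm) with h | h
    · exact .inl (add_right_cancel h)
    · exact .inr (eq_sub_of_add_eq h)
  calc {x : K | (x + α) ^ n = β}.ncard ≤ ({x₀, -(x₀ + α) - α} : Set K).ncard :=
        Set.ncard_le_ncard hsub (Set.toFinite _)
    _ ≤ ({-(x₀ + α) - α} : Set K).ncard + 1 := Set.ncard_insert_le _ _
    _ = 2 := by rw [Set.ncard_singleton]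

theorem setOf_add_pow_eq_one (hroots : ∀ v : K, v ^ n = 1 → v = 1 ∨ v = -1) (hn : Even n)
    (α : K) : {x : K | (x + α) ^ n = 1} = {1 - α, -1 - α} := by
  ext x
  constructor
  · intro hx
    rcases hroots _ hx with h | h
    · exact .inl (eq_sub_of_add_eq h)
    · exact .inr (eq_sub_of_add_eq h)
  · rintro (rfl | rfl)
    · simp
    · simp [hn.neg_one_pow]

end Fibres

section CompletingTheSquare

variable {K : Type*} [Field K] {p k : ℕ} [ExpChar K p] {c : K}

theorem add_pow_sub_mul_pow_eq (hc1 : c ≠ 1) (hc : c ^ p ^ k = c) (a x : K) :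
    (x + a) ^ (p ^ k + 1) - c * x ^ (p ^ k + 1) =
      (1 - c) * (x + a / (1 - c)) ^ (p ^ k + 1) - c / (1 - c) * a ^ (p ^ k + 1) := by
  have he : 1 - c ≠ 0 := sub_ne_zero.mpr hc1.symm
  have hec : (1 - c) ^ p ^ k = 1 - c := by rw [sub_pow_expChar_pow, one_pow, hc]
  simp only [pow_succ, add_pow_expChar_pow, div_pow, hec]
  field_simp
  ring

theorem setOf_add_pow_sub_mul_pow_eq (hc1 : c ≠ 1) (hc : c ^ p ^ k = c) (a b : K) :
    {x : K | (x + a) ^ (p ^ k + 1) - c * x ^ (p ^ k + 1) = b} =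
      {x : K | (x + a / (1 - c)) ^ (p ^ k + 1) = (b + c / (1 - c) * a ^ (p ^ k + 1)) / (1 - c)} := by
  ext x
  simp only [Set.mem_ofPred_eq, add_pow_sub_mul_pow_eq hc1 hc,
    eq_div_iff (sub_ne_zero.mpr hc1.symm)]
  constructor <;> intro h <;> linear_combination h

end CompletingTheSquare

theorem stmt_12_general (p m k : ℕ) (hp : p.Prime) (hodd : Odd p) (hm : 0 < m)
    (hv : padicValNat 2 m ≤ padicValNat 2 k)
    (F : Type*) [Field F] [Fintype F] (hcard : Fintype.card F = p ^ m)
    (c : F) (hc1 : c ≠ 1) (hsub : c ^ (p ^ Nat.gcd m k) = c) :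
    (∀ a b : F, ({x : F | (x + a) ^ (p ^ k + 1) - c * x ^ (p ^ k + 1) = b}).ncard ≤ 2) ∧
    (∃ b : F, ({x : F | (x + 1) ^ (p ^ k + 1) - c * x ^ (p ^ k + 1) = b}).ncard = 2) := by
  have : Fact p.Prime := ⟨hp⟩
  have : CharP F p := charP_of_card_eq_prime_pow hcard
  have hroots (v : F) : v ^ (p ^ k + 1) = 1 → v = 1 ∨ v = -1 :=
    FiniteField.eq_one_or_eq_neg_one_of_pow_pow_add_one_eq_one hcard hm.ne' hv
  have hck : c ^ p ^ k = c :=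
    isPeriodicPt_pow_iff.mp ((isPeriodicPt_pow_iff.mpr hsub).trans_dvd (Nat.gcd_dvd_right m k))
  refine ⟨fun a b => ?_, ⟨(1 - c) - c / (1 - c), ?_⟩⟩
  · rw [setOf_add_pow_sub_mul_pow_eq hc1 hck]
    exact ncard_setOf_add_pow_eq_le_two (by positivity) hroots _ _
  · have he : 1 - c ≠ 0 := sub_ne_zero.mpr hc1.symm
    have h2 : (2 : F) ≠ 0 := Ring.two_ne_zero <| by
      rw [ringChar.eq F p]; rintro rfl; exact Nat.not_odd_iff_even.mpr even_two hodd
    rw [setOf_add_pow_sub_mul_pow_eq hc1 hck, one_pow, mul_one, sub_add_cancel, div_self he,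
      setOf_add_pow_eq_one hroots hodd.pow.add_one, Set.ncard_pair]
    intro h
    exact h2 (by linear_combination h)

theorem stmt_12 (p m k : ℕ) (hp : p.Prime) (hodd : Odd p) (hm : 0 < m) (hk : 0 < k)
    (hv : padicValNat 2 m ≤ padicValNat 2 k)
    (F : Type*) [Field F] [Fintype F] (hcard : Fintype.card F = p ^ m)
    (c : F) (hc1 : c ≠ 1) (hsub : c ^ (p ^ Nat.gcd m k) = c) :
    (∀ a b : F, ({x : F | (x + a) ^ (p ^ k + 1) - c * x ^ (p ^ k + 1) = b}).ncard ≤ 2) ∧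
    (∃ b : F, ({x : F | (x + 1) ^ (p ^ k + 1) - c * x ^ (p ^ k + 1) = b}).ncard = 2) :=
  stmt_12_general p m k hp hodd hm hv F hcard c hc1 hsub
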